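/- arXiv:1109.0210 — 4 statements merged into one kernel-verified Lean document; each statement's English description precedes it below -/
import Mathlib

section
/- For 1 < p < 2 there is a constant c depending only on p such that for all real ε, a, b: F_ε(a,b) ≤ c·(b-a)^2·(max(|a|,|b|))^{p-2}, where F_ε(a,b) = (b^2+ε^2)^{p/2} - (a^2+ε^2)^{p/2} - p·a·(a^2+ε^2)^{(p-2)/2}·(b-a). -/
noncomputable def Fe (p ε a b : ℝ) : ℝ :=
  (b ^ 2 + ε ^ 2) ^ (p / 2) - (a ^ 2 + ε ^ 2) ^ (p / 2)
    - p * a * (a ^ 2 + ε ^ 2) ^ ((p - 2) / 2) * (b - a)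

/-!
Split according to whether `|b| ≤ 2|a|`. If so, concavity of `t ↦ t ^ (p/2)` (tangent line at
`a² + ε²`, evaluated at `b² + ε²`) bounds `F_ε(a,b)` by `(p/2) (a² + ε²)^((p-2)/2) (b-a)²`, and
`(a² + ε²)^((p-2)/2) ≤ |a|^(p-2)` is comparable to `max(|a|,|b|)^(p-2)` because `|a|` is comparable to
the maximum. Otherwise the maximum is `|b| ≤ 2|b - a|`, and each term of `F_ε(a,b)` is `O(|b|^p)`:
the difference of the first two by subadditivity of `t ↦ t ^ (p/2)`, the last since
`|a| (a² + ε²)^((p-2)/2) ≤ |a|^(p-1)`.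
-/

open Real

lemma rpow_le_tangent_line {x y q : ℝ} (hx : 0 < x) (hy : 0 ≤ y) (hq0 : 0 ≤ q) (hq1 : q ≤ 1) :
    y ^ q ≤ x ^ q + q * x ^ (q - 1) * (y - x) := by
  have bernoulli : (1 + (y / x - 1)) ^ q ≤ 1 + q * (y / x - 1) :=
    rpow_one_add_le_one_add_mul_self (by linarith [div_nonneg hy hx.le]) hq0 hq1
  have hscale : y ^ q = x ^ q * (y / x) ^ q := by
    rw [← mul_rpow hx.le (div_nonneg hy hx.le), mul_div_cancel₀ _ hx.ne']
  calc y ^ q = x ^ q * (1 + (y / x - 1)) ^ q := by rw [hscale]; ring_nf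
    _ ≤ x ^ q * (1 + q * (y / x - 1)) := by gcongr
    _ = x ^ q + q * x ^ (q - 1) * (y - x) := by
      rw [rpow_sub_one hx.ne']
      field_simp

lemma sq_rpow_div_two (t r : ℝ) : (t ^ 2) ^ (r / 2) = |t| ^ r := by
  rw [← sq_abs, ← rpow_natCast_mul (abs_nonneg t)]
  congr 1
  push_cast
  ring

lemma sq_add_sq_rpow_le_abs_rpow {a ε r : ℝ} (ha : a ≠ 0) (hr : r ≤ 0) :
    (a ^ 2 + ε ^ 2) ^ (r / 2) ≤ |a| ^ r := by
  rw [← sq_rpow_div_two]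
  exact rpow_le_rpow_of_nonpos (by positivity) (by linarith [sq_nonneg ε]) (by linarith)

lemma abs_mul_sq_add_sq_rpow_le {a ε p : ℝ} (hp : p ≤ 2) :
    |a| * (a ^ 2 + ε ^ 2) ^ ((p - 2) / 2) ≤ |a| ^ (p - 1) := by
  rcases eq_or_ne a 0 with rfl | ha
  · simpa using rpow_nonneg le_rfl _
  calc |a| * (a ^ 2 + ε ^ 2) ^ ((p - 2) / 2) ≤ |a| * |a| ^ (p - 2) := by
        gcongr; exact sq_add_sq_rpow_le_abs_rpow ha (by linarith)
    _ = |a| ^ (p - 1) := by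
      rw [show p - 1 = p - 2 + 1 by ring, rpow_add_one (abs_ne_zero.mpr ha), mul_comm]

lemma rpow_le_two_mul_rpow {x y r : ℝ} (hy : 0 < y) (hyx : y ≤ 2 * x) (hr1 : -1 ≤ r)
    (hr0 : r ≤ 0) : x ^ r ≤ 2 * y ^ r := by
  have htwo : (2 : ℝ)⁻¹ ≤ 2 ^ r := by
    simpa [rpow_neg_one] using rpow_le_rpow_of_exponent_le one_le_two hr1
  calc x ^ r ≤ (y / 2) ^ r := rpow_le_rpow_of_nonpos (by positivity) (by linarith) hr0
    _ = y ^ r / 2 ^ r := div_rpow hy.le zero_le_two r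
    _ ≤ 2 * y ^ r := by
      rw [div_le_iff₀ (by positivity)]
      nlinarith [rpow_pos_of_pos hy r]

lemma Fe_self (p ε a : ℝ) : Fe p ε a a = 0 := by
  simp [Fe]

lemma Fe_le_mul_sq {p ε a b : ℝ} (hp0 : 0 ≤ p) (hp2 : p ≤ 2) (h : 0 < a ^ 2 + ε ^ 2) :
    Fe p ε a b ≤ p / 2 * (a ^ 2 + ε ^ 2) ^ ((p - 2) / 2) * (b - a) ^ 2 := by
  have tangent := rpow_le_tangent_line h (by positivity : 0 ≤ b ^ 2 + ε ^ 2)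
    (by linarith : 0 ≤ p / 2) (by linarith : p / 2 ≤ 1)
  rw [show p / 2 - 1 = (p - 2) / 2 by ring] at tangent
  unfold Fe
  linear_combination tangent

lemma Fe_le_of_abs_le_two_mul_abs {p ε a b : ℝ} (hp1 : 1 ≤ p) (hp2 : p ≤ 2) (ha : a ≠ 0)
    (hb : |b| ≤ 2 * |a|) : Fe p ε a b ≤ p * (b - a) ^ 2 * (max |a| |b|) ^ (p - 2) := by
  have hM : (a ^ 2 + ε ^ 2) ^ ((p - 2) / 2) ≤ 2 * (max |a| |b|) ^ (p - 2) :=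
    (sq_add_sq_rpow_le_abs_rpow ha (by linarith)).trans <|
      rpow_le_two_mul_rpow (lt_max_of_lt_left (abs_pos.mpr ha))
        (max_le (by linarith [abs_nonneg a]) hb) (by linarith) (by linarith)
  calc Fe p ε a b ≤ p / 2 * (a ^ 2 + ε ^ 2) ^ ((p - 2) / 2) * (b - a) ^ 2 :=
        Fe_le_mul_sq (by linarith) hp2 (by positivity)
    _ ≤ p / 2 * (2 * (max |a| |b|) ^ (p - 2)) * (b - a) ^ 2 := by gcongr
    _ = p * (b - a) ^ 2 * (max |a| |b|) ^ (p - 2) := by ring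

lemma sq_add_sq_rpow_sub_le {p ε a b : ℝ} (hp0 : 0 ≤ p) (hp2 : p ≤ 2) (hab : |a| ≤ |b|) :
    (b ^ 2 + ε ^ 2) ^ (p / 2) - (a ^ 2 + ε ^ 2) ^ (p / 2) ≤ |b| ^ p := by
  have hsq : a ^ 2 ≤ b ^ 2 := sq_le_sq.mpr hab
  have subadd := rpow_add_le_add_rpow (sub_nonneg.mpr hsq) (by positivity : 0 ≤ a ^ 2 + ε ^ 2)
    (by linarith : 0 ≤ p / 2) (by linarith : p / 2 ≤ 1)
  have hmono : (b ^ 2 - a ^ 2) ^ (p / 2) ≤ (b ^ 2) ^ (p / 2) :=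
    rpow_le_rpow (by linarith) (by linarith [sq_nonneg a]) (by linarith)
  rw [show b ^ 2 - a ^ 2 + (a ^ 2 + ε ^ 2) = b ^ 2 + ε ^ 2 by ring] at subadd
  rw [sq_rpow_div_two] at hmono
  linarith

lemma Fe_le_of_two_mul_abs_lt {p ε a b : ℝ} (hp1 : 1 ≤ p) (hp2 : p ≤ 2) (h : 2 * |a| < |b|) :
    Fe p ε a b ≤ (1 + 2 * p) * |b| ^ p := by
  have hab : |a| ≤ |b| := by linarith [abs_nonneg a]
  have hb : 0 < |b| := by linarith [abs_nonneg a]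
  have linear : -(p * a * (a ^ 2 + ε ^ 2) ^ ((p - 2) / 2) * (b - a)) ≤ 2 * p * |b| ^ p :=
    calc -(p * a * (a ^ 2 + ε ^ 2) ^ ((p - 2) / 2) * (b - a))
        ≤ p * (|a| * (a ^ 2 + ε ^ 2) ^ ((p - 2) / 2)) * |b - a| := by
          refine (neg_le_abs _).trans (le_of_eq ?_)
          rw [abs_mul, abs_mul, abs_mul, abs_of_nonneg (by linarith : 0 ≤ p),
            abs_of_nonneg (rpow_nonneg (by positivity) _)]
          ring
      _ ≤ p * |b| ^ (p - 1) * (2 * |b|) := by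
          gcongr
          · exact (abs_mul_sq_add_sq_rpow_le hp2).trans
              (rpow_le_rpow (abs_nonneg a) hab (by linarith))
          · linarith [abs_sub b a]
      _ = 2 * p * |b| ^ p := by
          rw [rpow_sub_one hb.ne']
          field_simp
  have := sq_add_sq_rpow_sub_le (ε := ε) (by linarith) hp2 hab
  unfold Fe
  linarith

lemma abs_rpow_le_four_mul_sq_mul_rpow {p a b : ℝ} (h : 2 * |a| < |b|) :
    |b| ^ p ≤ 4 * (b - a) ^ 2 * |b| ^ (p - 2) := by
  have hb : 0 < |b| := by linarith [abs_nonneg a]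
  have hba : |b| ≤ 2 * |b - a| := by linarith [abs_sub_abs_le_abs_sub b a]
  calc |b| ^ p = |b| ^ 2 * |b| ^ (p - 2) := by
        rw [← rpow_natCast, ← rpow_add hb]; norm_num
    _ ≤ (2 * |b - a|) ^ 2 * |b| ^ (p - 2) := by gcongr
    _ = 4 * (b - a) ^ 2 * |b| ^ (p - 2) := by rw [mul_pow, sq_abs]; ring

theorem Fe_upper_bound (p : ℝ) (hp1 : 1 < p) (hp2 : p < 2) :
    ∃ c : ℝ, 0 < c ∧ ∀ ε a b : ℝ,
      Fe p ε a b ≤ c * (b - a) ^ 2 * (max |a| |b|) ^ (p - 2) := by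
  refine ⟨4 * (1 + 2 * p), by linarith, fun ε a b => ?_⟩
  rcases le_or_gt |b| (2 * |a|) with hb | hb
  · rcases eq_or_ne a 0 with rfl | ha
    · obtain rfl : b = 0 := by simpa using hb
      simp [Fe_self]
    calc Fe p ε a b ≤ p * (b - a) ^ 2 * (max |a| |b|) ^ (p - 2) :=
          Fe_le_of_abs_le_two_mul_abs hp1.le hp2.le ha hb
      _ ≤ 4 * (1 + 2 * p) * (b - a) ^ 2 * (max |a| |b|) ^ (p - 2) := by
          gcongr; linarith
  · rw [max_eq_right (by linarith [abs_nonneg a])]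
    calc Fe p ε a b ≤ (1 + 2 * p) * |b| ^ p := Fe_le_of_two_mul_abs_lt hp1.le hp2.le hb
      _ ≤ (1 + 2 * p) * (4 * (b - a) ^ 2 * |b| ^ (p - 2)) := by
          gcongr; exact abs_rpow_le_four_mul_sq_mul_rpow hb
      _ = 4 * (1 + 2 * p) * (b - a) ^ 2 * |b| ^ (p - 2) := by ring
end

section
/- For ε ≠ 0 and p > 1, the function a ↦ F_ε(a,b) is decreasing on (-∞, b] and increasing on [b, ∞). -/
/-!
`Fe p ε · b` is the Bregman divergence `g b - g a - g' a (b - a)` of the strictly convex function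
`g x = (x² + ε²)^(p/2)`, whose second derivative `p (x² + ε²)^((p-4)/2) (ε² + (p-1) x²)` is
positive. The derivative in `a` of the divergence is `-g''(a) (b - a)`, negative left of `b` and
positive right of `b`.
-/

open Set

theorem bregman_strictAntiOn_Iic_strictMonoOn_Ici {g g' g'' : ℝ → ℝ}
    (hg : ∀ x, HasDerivAt g (g' x) x) (hg' : ∀ x, HasDerivAt g' (g'' x) x)
    (hg''_pos : ∀ x, 0 < g'' x) (b : ℝ) :
    StrictAntiOn (fun a => g b - g a - g' a * (b - a)) (Iic b) ∧
    StrictMonoOn (fun a => g b - g a - g' a * (b - a)) (Ici b) := by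
  have hderiv : ∀ a, HasDerivAt (fun a => g b - g a - g' a * (b - a)) (-(g'' a * (b - a))) a := by
    intro a
    have hlin : HasDerivAt (fun x => b - x) (-1) a := by simpa using (hasDerivAt_id a).const_sub b
    exact (((hasDerivAt_const a (g b)).sub (hg a)).sub ((hg' a).mul hlin)).congr_deriv (by ring)
  have hcont : Continuous (fun a => g b - g a - g' a * (b - a)) :=
    continuous_iff_continuousAt.2 fun a => (hderiv a).continuousAt
  constructor
  · refine strictAntiOn_of_deriv_neg (convex_Iic b) hcont.continuousOn fun a ha => ?_
    rw [interior_Iic] at ha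
    rw [(hderiv a).deriv, neg_lt_zero]
    exact mul_pos (hg''_pos a) (sub_pos.2 ha)
  · refine strictMonoOn_of_deriv_pos (convex_Ici b) hcont.continuousOn fun a ha => ?_
    rw [interior_Ici] at ha
    rw [(hderiv a).deriv, neg_pos]
    exact mul_neg_of_pos_of_neg (hg''_pos a) (sub_neg.2 ha)

section

variable {ε : ℝ} (hε : ε ≠ 0) (p : ℝ)
include hε

theorem hasDerivAt_rpow_sq_add_sq (a : ℝ) :
    HasDerivAt (fun x => (x ^ 2 + ε ^ 2) ^ (p / 2))
      (p * a * (a ^ 2 + ε ^ 2) ^ ((p - 2) / 2)) a := by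
  have hpos : 0 < a ^ 2 + ε ^ 2 := by positivity
  convert (((hasDerivAt_pow 2 a).add_const (ε ^ 2)).rpow_const (p := p / 2) (Or.inl hpos.ne'))
    using 1
  rw [show p / 2 - 1 = (p - 2) / 2 by ring]
  push_cast
  ring

theorem hasDerivAt_mul_rpow_sq_add_sq (a : ℝ) :
    HasDerivAt (fun x => p * x * (x ^ 2 + ε ^ 2) ^ ((p - 2) / 2))
      (p * (a ^ 2 + ε ^ 2) ^ ((p - 4) / 2) * (ε ^ 2 + (p - 1) * a ^ 2)) a := by
  have hpos : 0 < a ^ 2 + ε ^ 2 := by positivity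
  have hrpow := ((hasDerivAt_pow 2 a).add_const (ε ^ 2)).rpow_const
    (p := (p - 2) / 2) (Or.inl hpos.ne')
  have hlin : HasDerivAt (fun x => p * x) p a := by simpa using (hasDerivAt_id a).const_mul p
  refine (hlin.mul hrpow).congr_deriv ?_
  -- `X^((p-2)/2) = X^((p-4)/2) * X` brings both sides to the same power of `X = a² + ε²`
  rw [show (p - 2) / 2 - 1 = (p - 4) / 2 by ring,
    show (p - 2) / 2 = (p - 4) / 2 + 1 by ring, Real.rpow_add_one hpos.ne']
  push_cast
  ring

end

theorem Fe_monotone_in_a (p ε b : ℝ) (hp : 1 < p) (hε : ε ≠ 0) :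
    StrictAntiOn (fun a => Fe p ε a b) (Set.Iic b) ∧
    StrictMonoOn (fun a => Fe p ε a b) (Set.Ici b) := by
  refine bregman_strictAntiOn_Iic_strictMonoOn_Ici (hasDerivAt_rpow_sq_add_sq hε p)
    (hasDerivAt_mul_rpow_sq_add_sq hε p) (fun a => ?_) b
  have hε2 : 0 < ε ^ 2 := by positivity
  have hlast : 0 < ε ^ 2 + (p - 1) * a ^ 2 := by nlinarith [sq_nonneg a]
  have hp0 : 0 < p := by linarith
  have hrpow : 0 < (a ^ 2 + ε ^ 2) ^ ((p - 4) / 2) := by positivity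
  exact mul_pos (mul_pos hp0 hrpow) hlast
end

section
/- For every p > 1 and all real a₁, a₂, b₁, b₂, ε: F_ε(max(a₁,a₂), max(b₁,b₂)) ≤ max(F_ε(a₁,b₁), F_ε(a₂,b₂)). -/
/-!
`Fe p ε` is the Bregman divergence `D(a, b) = φ b - φ a - φ' a * (b - a)` of
`φ x = (x² + ε²)^(p/2) = ‖x + ε i‖^p`, which is convex and differentiable (also at the
degenerate point `x = ε = 0`) as `‖·‖^p` is. For any such `φ`, `D ≥ 0` and `φ'` is monotone.
If `a₂ ≤ a₁` and `b₁ ≤ b₂`, then `D(a₁, b₂)` differs from `D(a₂, b₂)` (when `a₁ ≤ b₂`) or from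
`D(a₁, b₁)` (when `b₂ ≤ a₁`) by a divergence plus a product of two nonnegative factors, one of
them an increment of `φ'`.
-/

open Set Complex

theorem convexOn_norm_rpow {E : Type*} [SeminormedAddCommGroup E] [NormedSpace ℝ E] {p : ℝ}
    (hp : 1 ≤ p) : ConvexOn ℝ univ fun x : E ↦ ‖x‖ ^ p := by
  refine ⟨convex_univ, fun x _ y _ a b ha hb hab ↦ ?_⟩
  calc ‖a • x + b • y‖ ^ p ≤ (a * ‖x‖ + b * ‖y‖) ^ p := by
        gcongr
        calc ‖a • x + b • y‖ ≤ ‖a • x‖ + ‖b • y‖ := norm_add_le _ _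
          _ = a * ‖x‖ + b * ‖y‖ := by
            rw [norm_smul, norm_smul, Real.norm_of_nonneg ha, Real.norm_of_nonneg hb]
    _ ≤ a • ‖x‖ ^ p + b • ‖y‖ ^ p :=
        (convexOn_rpow hp).2 (norm_nonneg x) (norm_nonneg y) ha hb hab

theorem norm_ofReal_add_mul_I_rpow (x y q : ℝ) :
    ‖(x + y * I : ℂ)‖ ^ q = (x ^ 2 + y ^ 2) ^ (q / 2) := by
  rw [norm_add_mul_I, Real.sqrt_eq_rpow, ← Real.rpow_mul (by positivity)]
  ring_nf

theorem convexOn_sq_add_sq_rpow (ε : ℝ) {p : ℝ} (hp : 1 ≤ p) :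
    ConvexOn ℝ univ fun x : ℝ ↦ (x ^ 2 + ε ^ 2) ^ (p / 2) := by
  have h : (fun x : ℝ ↦ (x ^ 2 + ε ^ 2) ^ (p / 2))
      = fun x : ℝ ↦ ‖(x + ε * I : ℂ)‖ ^ p :=
    funext fun x ↦ (norm_ofReal_add_mul_I_rpow x ε p).symm
  rw [h]
  exact ((convexOn_norm_rpow hp).translate_left (ε * I : ℂ)).comp_linearMap
    ofRealCLM.toLinearMap

theorem hasDerivAt_sq_add_sq_rpow (ε : ℝ) {p : ℝ} (hp : 1 < p) (x : ℝ) :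
    HasDerivAt (fun x : ℝ ↦ (x ^ 2 + ε ^ 2) ^ (p / 2))
      (p * x * (x ^ 2 + ε ^ 2) ^ ((p - 2) / 2)) x := by
  have hz : HasDerivAt (fun x : ℝ ↦ (x + ε * I : ℂ)) 1 x :=
    (hasDerivAt_id x).ofReal_comp.add_const _
  have h := (hasFDerivAt_norm_rpow (x + ε * I : ℂ) hp).comp_hasDerivAt x hz
  simp only [Function.comp_def, norm_ofReal_add_mul_I_rpow] at h
  have hinner : innerSL ℝ ((x : ℂ) + ε * I) 1 = x := by simp
  rw [smul_apply, hinner, smul_eq_mul] at h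
  exact h.congr_deriv (by ring)

def bregman (f f' : ℝ → ℝ) (a b : ℝ) : ℝ := f b - f a - f' a * (b - a)

namespace ConvexOn

variable {f f' : ℝ → ℝ}

theorem bregman_nonneg (hf : ConvexOn ℝ univ f) (hf' : ∀ x, HasDerivAt f (f' x) x) (a b : ℝ) :
    0 ≤ bregman f f' a b := by
  unfold bregman
  rcases lt_trichotomy a b with hab | rfl | hab
  · have h := hf.le_slope_of_hasDerivAt (mem_univ a) (mem_univ b) hab (hf' a)
    rw [slope_def_field, le_div_iff₀ (sub_pos.2 hab)] at h
    linarith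
  · simp
  · have h := hf.slope_le_of_hasDerivAt (mem_univ b) (mem_univ a) hab (hf' a)
    rw [slope_def_field, div_le_iff₀ (sub_pos.2 hab)] at h
    linarith

theorem monotone_derivative (hf : ConvexOn ℝ univ f) (hf' : ∀ x, HasDerivAt f (f' x) x) :
    Monotone f' := by
  intro a b hab
  rcases hab.eq_or_lt with rfl | hab
  · rfl
  exact (hf.le_slope_of_hasDerivAt (mem_univ a) (mem_univ b) hab (hf' a)).trans
    (hf.slope_le_of_hasDerivAt (mem_univ a) (mem_univ b) hab (hf' b))

theorem bregman_le_max_of_le (hf : ConvexOn ℝ univ f) (hf' : ∀ x, HasDerivAt f (f' x) x)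
    {a₁ a₂ b₁ b₂ : ℝ} (ha : a₂ ≤ a₁) (hb : b₁ ≤ b₂) :
    bregman f f' a₁ b₂ ≤ max (bregman f f' a₁ b₁) (bregman f f' a₂ b₂) := by
  have hmono := hf.monotone_derivative hf'
  rcases le_total a₁ b₂ with hab | hba
  · have key : bregman f f' a₂ b₂ = bregman f f' a₁ b₂ + bregman f f' a₂ a₁
        + (f' a₁ - f' a₂) * (b₂ - a₁) := by
      unfold bregman; ring
    have hD := hf.bregman_nonneg hf' a₂ a₁
    have hprod := mul_nonneg (sub_nonneg.2 (hmono ha)) (sub_nonneg.2 hab)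
    exact le_max_of_le_right (by linarith)
  · have key : bregman f f' a₁ b₁ = bregman f f' a₁ b₂ + bregman f f' b₂ b₁
        + (f' a₁ - f' b₂) * (b₂ - b₁) := by
      unfold bregman; ring
    have hD := hf.bregman_nonneg hf' b₂ b₁
    have hprod := mul_nonneg (sub_nonneg.2 (hmono hba)) (sub_nonneg.2 hb)
    exact le_max_of_le_left (by linarith)

theorem bregman_max_le_max (hf : ConvexOn ℝ univ f) (hf' : ∀ x, HasDerivAt f (f' x) x)
    (a₁ a₂ b₁ b₂ : ℝ) :
    bregman f f' (max a₁ a₂) (max b₁ b₂)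
      ≤ max (bregman f f' a₁ b₁) (bregman f f' a₂ b₂) := by
  wlog ha : a₂ ≤ a₁ generalizing a₁ a₂ b₁ b₂
  · simpa only [max_comm] using this a₂ a₁ b₂ b₁ (le_of_not_ge ha)
  rw [max_eq_left ha]
  rcases le_total b₂ b₁ with hb | hb
  · rw [max_eq_left hb]
    exact le_max_left _ _
  · rw [max_eq_right hb]
    exact hf.bregman_le_max_of_le hf' ha hb

end ConvexOn

theorem Fe_max (p : ℝ) (hp : 1 < p) (ε a₁ a₂ b₁ b₂ : ℝ) :
    Fe p ε (max a₁ a₂) (max b₁ b₂) ≤ max (Fe p ε a₁ b₁) (Fe p ε a₂ b₂) :=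
  (convexOn_sq_add_sq_rpow ε hp.le).bregman_max_le_max (hasDerivAt_sq_add_sq_rpow ε hp)
    a₁ a₂ b₁ b₂
end

section
/- Let D ⊂ ℝ^d be open, u, h : D → ℝ with h > 0 on D, and suppose u and h are C² on D and harmonic (Δu = 0, Δh = 0) on D, with u ≠ 0 at a point x or p ≥ 2. Then at such points, Δ(|u|^p / h^{p-1}) = p(p-1)·|u/h|^{p-2}·|∇(u/h)|²·h. -/
/-!
Write `|u|^p / h^(p-1) = h · φ(v)` with `v = u / h` and `φ(t) = |t|^p`. The product and chain
rules for the Laplacian give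
`Δ(h · φ(v)) = φ(v) Δh + φ'(v) (h Δv + 2 ∇h·∇v) + h φ''(v) |∇v|²`,
and `h Δv + 2 ∇h·∇v = Δ(h v) - v Δh = Δu - v Δh`, so only the last term survives.
Nothing beyond a derivative of `φ'(t) = p |t|^(p-2) t` at `v(x)` is needed from `φ`; it exists
when `v(x) ≠ 0` or `p ≥ 2`.
-/

noncomputable def lap {d : ℕ} (f : EuclideanSpace ℝ (Fin d) → ℝ) (x : EuclideanSpace ℝ (Fin d)) : ℝ :=
  ∑ i, fderiv ℝ (fun y => fderiv ℝ f y (EuclideanSpace.single i 1)) x (EuclideanSpace.single i 1)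

open Filter Topology

theorem hasDerivAt_mul_id_zero {g : ℝ → ℝ} (hg : ContinuousAt g 0) :
    HasDerivAt (fun t => g t * t) (g 0) 0 := by
  rw [hasDerivAt_iff_tendsto_slope]
  refine (hg.tendsto.mono_left nhdsWithin_le_nhds).congr' ?_
  filter_upwards [self_mem_nhdsWithin] with t (ht : t ≠ 0)
  simp [slope_def_field, ht]

theorem hasDerivAt_abs_rpow_sub_two_mul {p a : ℝ} (ha : a ≠ 0 ∨ 2 ≤ p) :
    HasDerivAt (fun t => |t| ^ (p - 2) * t) ((p - 1) * |a| ^ (p - 2)) a := by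
  rcases eq_or_ne a 0 with rfl | ha0
  · have hp2 : 2 ≤ p := ha.resolve_left (not_not.2 rfl)
    have hcont : ContinuousAt (fun t : ℝ => |t| ^ (p - 2)) 0 :=
      continuous_abs.continuousAt.rpow_const (Or.inr (by linarith))
    convert hasDerivAt_mul_id_zero hcont using 1
    rcases hp2.eq_or_lt with rfl | hp2
    · norm_num
    · simp [Real.zero_rpow (by linarith : p - 2 ≠ 0)]
  · have habs : HasDerivAt (fun t => |t| ^ (p - 2))
        (SignType.sign a * (p - 2) * |a| ^ (p - 2 - 1)) a :=
      (hasDerivAt_abs ha0).rpow_const (Or.inl (abs_ne_zero.2 ha0))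
    refine (habs.mul (hasDerivAt_id' a)).congr_deriv ?_
    have hpow : |a| ^ (p - 2) = |a| ^ (p - 2 - 1) * |a| := by
      rw [← Real.rpow_add_one (abs_ne_zero.2 ha0), sub_add_cancel]
    rw [hpow, ← sign_mul_self a]
    ring

/-- Weaker than `ContDiffAt ℝ 2 f x`, but all that `lap` sees. -/
structure HasSecondFDerivAt {E : Type*} [NormedAddCommGroup E] [NormedSpace ℝ E]
    (f : E → ℝ) (f' : E → E →L[ℝ] ℝ) (f'' : E →L[ℝ] E →L[ℝ] ℝ) (x : E) : Prop where
  eventually_hasFDerivAt : ∀ᶠ y in 𝓝 x, HasFDerivAt f (f' y) y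
  hasFDerivAt_deriv : HasFDerivAt f' f'' x

section
variable {E : Type*} [NormedAddCommGroup E] [NormedSpace ℝ E] {f g : E → ℝ}
  {f' g' : E → E →L[ℝ] ℝ} {f'' g'' : E →L[ℝ] E →L[ℝ] ℝ} {x : E}

theorem ContDiffAt.hasSecondFDerivAt (hf : ContDiffAt ℝ 2 f x) :
    HasSecondFDerivAt f (fderiv ℝ f) (fderiv ℝ (fderiv ℝ f) x) x where
  eventually_hasFDerivAt := (hf.eventually (by simp)).mono fun _ hy =>
    (hy.differentiableAt two_ne_zero).hasFDerivAt
  hasFDerivAt_deriv :=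
    ((hf.fderiv_right (m := 1) le_rfl).differentiableAt one_ne_zero).hasFDerivAt

namespace HasSecondFDerivAt

theorem hasFDerivAt (hf : HasSecondFDerivAt f f' f'' x) : HasFDerivAt f (f' x) x :=
  hf.eventually_hasFDerivAt.self_of_nhds

theorem mul (hf : HasSecondFDerivAt f f' f'' x) (hg : HasSecondFDerivAt g g' g'' x) :
    HasSecondFDerivAt (fun y => f y * g y) (fun y => f y • g' y + g y • f' y)
      (f x • g'' + (f' x).smulRight (g' x) + (g x • f'' + (g' x).smulRight (f' x))) x where
  eventually_hasFDerivAt := (hf.eventually_hasFDerivAt.and hg.eventually_hasFDerivAt).mono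
    fun _ hy => hy.1.fun_mul hy.2
  hasFDerivAt_deriv := (hf.hasFDerivAt.smul hg.hasFDerivAt_deriv).add
    (hg.hasFDerivAt.smul hf.hasFDerivAt_deriv)

theorem comp {φ φ' : ℝ → ℝ} {φ'' : ℝ} (hφ : ∀ᶠ t in 𝓝 (f x), HasDerivAt φ (φ' t) t)
    (hφ' : HasDerivAt φ' φ'' (f x)) (hf : HasSecondFDerivAt f f' f'' x) :
    HasSecondFDerivAt (fun y => φ (f y)) (fun y => φ' (f y) • f' y)
      (φ' (f x) • f'' + (φ'' • f' x).smulRight (f' x)) x where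
  eventually_hasFDerivAt :=
    ((hf.hasFDerivAt.continuousAt.eventually hφ).and hf.eventually_hasFDerivAt).mono
      fun _ hy => hy.1.comp_hasFDerivAt _ hy.2
  hasFDerivAt_deriv := (hφ'.comp_hasFDerivAt x hf.hasFDerivAt).smul hf.hasFDerivAt_deriv

end HasSecondFDerivAt
end

section
open EuclideanSpace

variable {d : ℕ} {f g : EuclideanSpace ℝ (Fin d) → ℝ}
  {f' g' : EuclideanSpace ℝ (Fin d) → EuclideanSpace ℝ (Fin d) →L[ℝ] ℝ}
  {f'' g'' : EuclideanSpace ℝ (Fin d) →L[ℝ] EuclideanSpace ℝ (Fin d) →L[ℝ] ℝ}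
  {x : EuclideanSpace ℝ (Fin d)}

theorem Filter.EventuallyEq.lap_eq (hfg : f =ᶠ[𝓝 x] g) : lap f x = lap g x := by
  unfold lap
  refine Finset.sum_congr rfl fun i _ => ?_
  have hpartial :
      (fun y => fderiv ℝ f y (single i 1)) =ᶠ[𝓝 x] fun y => fderiv ℝ g y (single i 1) := by
    filter_upwards [hfg.fderiv (𝕜 := ℝ)] with y hy
    rw [hy]
  rw [hpartial.fderiv_eq]

theorem HasSecondFDerivAt.lap_eq (hf : HasSecondFDerivAt f f' f'' x) :
    lap f x = ∑ i, f'' (single i 1) (single i 1) := by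
  unfold lap
  refine Finset.sum_congr rfl fun i _ => ?_
  have hpartial : (fun y => fderiv ℝ f y (single i 1)) =ᶠ[𝓝 x] fun y => f' y (single i 1) :=
    hf.eventually_hasFDerivAt.mono fun y hy => by simp only [hy.fderiv]
  rw [hpartial.fderiv_eq, (hf.hasFDerivAt_deriv.clm_apply (hasFDerivAt_const _ x)).fderiv]
  simp

theorem HasSecondFDerivAt.lap_mul (hf : HasSecondFDerivAt f f' f'' x)
    (hg : HasSecondFDerivAt g g' g'' x) :
    lap (fun y => f y * g y) x =
      f x * lap g x + 2 * ∑ i, f' x (single i 1) * g' x (single i 1) + g x * lap f x := by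
  rw [(hf.mul hg).lap_eq, hf.lap_eq, hg.lap_eq, Finset.mul_sum, Finset.mul_sum, Finset.mul_sum,
    ← Finset.sum_add_distrib, ← Finset.sum_add_distrib]
  refine Finset.sum_congr rfl fun i _ => ?_
  simp only [add_apply, smul_apply, ContinuousLinearMap.smulRight_apply, smul_eq_mul]
  ring

theorem HasSecondFDerivAt.lap_comp {φ φ' : ℝ → ℝ} {φ'' : ℝ}
    (hφ : ∀ᶠ t in 𝓝 (f x), HasDerivAt φ (φ' t) t) (hφ' : HasDerivAt φ' φ'' (f x))
    (hf : HasSecondFDerivAt f f' f'' x) :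
    lap (fun y => φ (f y)) x = φ'' * ∑ i, f' x (single i 1) ^ 2 + φ' (f x) * lap f x := by
  rw [(hf.comp hφ hφ').lap_eq, hf.lap_eq, Finset.mul_sum, Finset.mul_sum,
    ← Finset.sum_add_distrib]
  refine Finset.sum_congr rfl fun i _ => ?_
  simp only [add_apply, smul_apply, ContinuousLinearMap.smulRight_apply, smul_eq_mul]
  ring

theorem norm_gradient_sq_eq_sum (f : EuclideanSpace ℝ (Fin d) → ℝ)
    (x : EuclideanSpace ℝ (Fin d)) :
    ‖gradient f x‖ ^ 2 = ∑ i, fderiv ℝ f x (single i 1) ^ 2 := by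
  rw [EuclideanSpace.real_norm_sq_eq]
  refine Finset.sum_congr rfl fun i _ => ?_
  rw [gradient, ← InnerProductSpace.toDual_symm_apply, real_inner_comm, inner_single_left]
  simp
end

theorem laplacian_abs_pow_div (d : ℕ) (p : ℝ) (hp : 1 < p)
    (D : Set (EuclideanSpace ℝ (Fin d))) (hD : IsOpen D)
    (u h : EuclideanSpace ℝ (Fin d) → ℝ)
    (hu : ContDiffOn ℝ 2 u D) (hh : ContDiffOn ℝ 2 h D)
    (hpos : ∀ x ∈ D, 0 < h x)
    (huharm : ∀ x ∈ D, lap u x = 0) (hhharm : ∀ x ∈ D, lap h x = 0)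
    (x : EuclideanSpace ℝ (Fin d)) (hx : x ∈ D) (hcase : 2 ≤ p ∨ u x ≠ 0) :
    lap (fun y => |u y| ^ p / h y ^ (p - 1)) x =
      p * (p - 1) * |u x / h x| ^ (p - 2) * ‖gradient (fun y => u y / h y) x‖ ^ 2 * h x := by
  have hxD : D ∈ 𝓝 x := hD.mem_nhds hx
  have hhx : 0 < h x := hpos x hx
  have hh2 : ContDiffAt ℝ 2 h x := hh.contDiffAt hxD
  set v : EuclideanSpace ℝ (Fin d) → ℝ := fun y => u y / h y
  have Hh := hh2.hasSecondFDerivAt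
  have hv2 : ContDiffAt ℝ 2 v x := (hu.contDiffAt hxD).div hh2 hhx.ne'
  have Hv := hv2.hasSecondFDerivAt
  have hφ : ∀ᶠ t in 𝓝 (v x), HasDerivAt (fun t => |t| ^ p) (p * |t| ^ (p - 2) * t) t :=
    .of_forall fun t => hasDerivAt_abs_rpow t hp
  have hφ' :
      HasDerivAt (fun t => p * |t| ^ (p - 2) * t) (p * ((p - 1) * |v x| ^ (p - 2))) (v x) := by
    have hvx : v x ≠ 0 ∨ 2 ≤ p := hcase.symm.imp_left fun hux => div_ne_zero hux hhx.ne'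
    simpa only [mul_assoc] using (hasDerivAt_abs_rpow_sub_two_mul hvx).const_mul p
  have hu_eq : (fun y => h y * v y) =ᶠ[𝓝 x] u := by
    filter_upwards [hD.eventually_mem hx] with y hy
    exact mul_div_cancel₀ _ (hpos y hy).ne'
  have hG_eq : (fun y => h y * |v y| ^ p) =ᶠ[𝓝 x] fun y => |u y| ^ p / h y ^ (p - 1) := by
    filter_upwards [hD.eventually_mem hx] with y hy
    have hhy := hpos y hy
    rw [abs_div, abs_of_pos hhy, Real.div_rpow (abs_nonneg _) hhy.le, Real.rpow_sub_one hhy.ne']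
    field_simp
  have hΔh : lap h x = 0 := hhharm x hx
  have hΔu : h x * lap v x + 2 * ∑ i, fderiv ℝ h x (EuclideanSpace.single i 1) *
      fderiv ℝ v x (EuclideanSpace.single i 1) = 0 := by
    have := Hh.lap_mul Hv
    rw [hu_eq.lap_eq, huharm x hx, hΔh] at this
    linarith
  rw [← hG_eq.lap_eq, Hh.lap_mul (Hv.comp hφ hφ'), Hv.lap_comp hφ hφ', hΔh,
    norm_gradient_sq_eq_sum]
  simp only [smul_apply, smul_eq_mul, mul_left_comm _ (p * |v x| ^ (p - 2) * v x),
    ← Finset.mul_sum]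
  linear_combination (p * |v x| ^ (p - 2) * v x) * hΔu
end
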